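/- arXiv:1807.08427 — 4 statements merged into one kernel-verified Lean document; each statement's English description precedes it below -/
import Mathlib

section
/- Let σ = σ₁·σ₂. Suppose there is no HB-race within σ₁ and no HB-race within σ₂, and suppose there is an HB-race between events e ∈ σ₁ and e' ∈ σ₂. Then there is an HB-race between last₁ and first₂, where last₁ is the last read of x by the thread of e in σ₁ if e is a read of x, and the last write of x in σ₁ if e is a write of x; and first₂ is the first read of x by the thread of e' in σ₂ if e' is a read of x, and the first write of x in σ₂ if e' is a write of x. -/
/-- Operations performed by events: reads/writes of variables, acquires/releases
of locks, forks/joins of threads. -/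
inductive Op (V L T : Type) : Type where
  | rd (x : V) | wt (x : V) | acq (l : L) | rel (l : L) | fork (t : T) | join (t : T)
  deriving DecidableEq

/-- An event is a thread together with an operation. -/
structure Event (V L T : Type) : Type where
  thread : T
  op : Op V L T
  deriving DecidableEq

/-- A trace is a finite sequence of events; events are referred to by their
position (index) in the trace. -/
abbrev Trace (V L T : Type) := List (Event V L T)

variable {V L T : Type}

/-- The base edges of the happens-before relation: `i` precedes `j` in trace order and
the events are in the same thread, form a rel/acq pair on a lock, a fork-to-child
pair, or a child-to-join pair. -/
def hbEdge (σ : Trace V L T) (i j : ℕ) : Prop :=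
  i < j ∧ ∃ e e', σ[i]? = some e ∧ σ[j]? = some e' ∧
    (e.thread = e'.thread ∨
     (∃ l, e.op = Op.rel l ∧ e'.op = Op.acq l) ∨
     e.op = Op.fork e'.thread ∨
     e'.op = Op.join e.thread)

/-- Happens-before: the reflexive-transitive closure of the base edges. -/
def HB (σ : Trace V L T) : ℕ → ℕ → Prop :=
  Relation.ReflTransGen (hbEdge σ)

/-- Two events conflict: different threads, access a common variable, at least one write. -/
def Conflict (e e' : Event V L T) : Prop :=
  e.thread ≠ e'.thread ∧
  ∃ x, (e.op = Op.wt x ∧ (e'.op = Op.wt x ∨ e'.op = Op.rd x)) ∨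
       (e.op = Op.rd x ∧ e'.op = Op.wt x)

/-- A trace has an HB-race iff it has a pair of conflicting events incomparable
under happens-before. -/
def HBRace (σ : Trace V L T) : Prop :=
  ∃ i j e e', σ[i]? = some e ∧ σ[j]? = some e' ∧ Conflict e e' ∧
    ¬ HB σ i j ∧ ¬ HB σ j i

/-- `f` is an event of the same "kind" as the access event `e` of variable `x`:
a read of `x` by the thread of `e` if `e` reads `x`, and a write of `x` if `e` writes `x`. -/
def SameKind (e f : Event V L T) (x : V) : Prop :=
  (e.op = Op.rd x ∧ f.thread = e.thread ∧ f.op = Op.rd x) ∨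
  (e.op = Op.wt x ∧ f.op = Op.wt x)

/-!
The last access `fl` of the kind of `e` in `σ₁` happens after `e`: either both are reads by the
same thread, or both are writes of `x`, which are ordered because `σ₁` is race-free.
Symmetrically the first access `ff` of the kind of `e'` in `σ₂` happens before `e'`. So
`fl ≤HB ff` would give `e ≤HB e'`, while `ff ≤HB fl` contradicts trace order. Finally `fl` and
`ff` access `x` exactly as `e` and `e'` do, and run in different threads since otherwise
program order would put `fl` before `ff`.
-/

lemma List.getElem?_append_left_of_eq_some {α : Type*} {l₁ : List α} (l₂ : List α) {i : ℕ}
    {a : α} (h : l₁[i]? = some a) : (l₁ ++ l₂)[i]? = some a := by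
  grind

lemma List.getElem?_append_length_add {α : Type*} (l₁ l₂ : List α) (i : ℕ) :
    (l₁ ++ l₂)[l₁.length + i]? = l₂[i]? := by
  simp [List.getElem?_append_right]

section HappensBefore

variable {σ σ₁ σ₂ : Trace V L T} {a b : ℕ} {e f : Event V L T}

lemma HB.le (h : HB σ a b) : a ≤ b := by
  induction h with
  | refl => exact le_rfl
  | tail _ hedge ih => exact ih.trans hedge.1.le

lemma HB.of_thread_eq (ha : σ[a]? = some e) (hb : σ[b]? = some f)
    (ht : e.thread = f.thread) (hab : a ≤ b) : HB σ a b := by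
  rcases hab.eq_or_lt with rfl | hlt
  · exact .refl
  · exact .single ⟨hlt, e, f, ha, hb, Or.inl ht⟩

lemma HB.of_conflict (hnr : ¬ HBRace σ) (ha : σ[a]? = some e) (hb : σ[b]? = some f)
    (hc : Conflict e f) (hab : a ≤ b) : HB σ a b := by
  by_contra h
  exact hnr ⟨a, b, e, f, ha, hb, hc, h, fun h' => h (le_antisymm hab h'.le ▸ .refl)⟩

lemma HB.of_thread_eq_or_conflict (hnr : ¬ HBRace σ) (ha : σ[a]? = some e)
    (hb : σ[b]? = some f) (h : e.thread = f.thread ∨ Conflict e f) (hab : a ≤ b) :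
    HB σ a b :=
  h.elim (HB.of_thread_eq ha hb · hab) (HB.of_conflict hnr ha hb · hab)

lemma hbEdge.append_right (σ₂ : Trace V L T) (h : hbEdge σ₁ a b) :
    hbEdge (σ₁ ++ σ₂) a b := by
  obtain ⟨hlt, e, f, he, hf, hr⟩ := h
  exact ⟨hlt, e, f, List.getElem?_append_left_of_eq_some σ₂ he,
    List.getElem?_append_left_of_eq_some σ₂ hf, hr⟩

lemma hbEdge.append_left (σ₁ : Trace V L T) (h : hbEdge σ₂ a b) :
    hbEdge (σ₁ ++ σ₂) (σ₁.length + a) (σ₁.length + b) := by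
  obtain ⟨hlt, e, f, he, hf, hr⟩ := h
  exact ⟨by omega, e, f, by rwa [List.getElem?_append_length_add],
    by rwa [List.getElem?_append_length_add], hr⟩

lemma HB.append_right (σ₂ : Trace V L T) (h : HB σ₁ a b) : HB (σ₁ ++ σ₂) a b :=
  Relation.ReflTransGen.mono (fun _ _ => hbEdge.append_right σ₂) _ _ h

lemma HB.append_left (σ₁ : Trace V L T) (h : HB σ₂ a b) :
    HB (σ₁ ++ σ₂) (σ₁.length + a) (σ₁.length + b) :=
  Relation.ReflTransGen.lift (σ₁.length + ·) (fun _ _ => hbEdge.append_left σ₁) _ _ h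

end HappensBefore

section SameKind

variable {e e' f f' : Event V L T} {x : V}

lemma Conflict.symm (h : Conflict e f) : Conflict f e := by
  obtain ⟨ht, y, hy⟩ := h
  refine ⟨Ne.symm ht, y, ?_⟩
  rcases hy with ⟨he, hf | hf⟩ | ⟨he, hf⟩ <;> simp [he, hf]

lemma SameKind.self (h : SameKind e f x) : SameKind e e x := by
  rcases h with ⟨he, -, -⟩ | ⟨he, -⟩
  · exact .inl ⟨he, rfl, he⟩
  · exact .inr ⟨he, he⟩

lemma SameKind.thread_eq_or_conflict (h : SameKind e f x) :
    e.thread = f.thread ∨ Conflict e f := by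
  rcases h with ⟨-, ht, -⟩ | ⟨he, hf⟩
  · exact .inl ht.symm
  · exact (em _).imp_right fun ht => ⟨ht, x, .inl ⟨he, .inl hf⟩⟩

lemma Conflict.of_sameKind (hc : Conflict e e') (hf : SameKind e f x) (hf' : SameKind e' f' x)
    (ht : f.thread ≠ f'.thread) : Conflict f f' := by
  obtain ⟨-, y, hy⟩ := hc
  refine ⟨ht, x, ?_⟩
  rcases hf with ⟨he, -, hf⟩ | ⟨he, hf⟩ <;> rcases hf' with ⟨he', -, hf'⟩ | ⟨he', hf'⟩ <;>
    simp_all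

end SameKind

theorem race_last_first_general (σ₁ σ₂ : Trace V L T) (x : V)
    (hnr1 : ¬ HBRace σ₁) (hnr2 : ¬ HBRace σ₂)
    (i j : ℕ) (e e' : Event V L T)
    (hie : σ₁[i]? = some e) (hje : σ₂[j]? = some e')
    (hconf : Conflict e e')
    (hincomp : ¬ HB (σ₁ ++ σ₂) i (σ₁.length + j) ∧ ¬ HB (σ₁ ++ σ₂) (σ₁.length + j) i)
    (il jf : ℕ) (fl ff : Event V L T)
    (hil : σ₁[il]? = some fl) (hjf : σ₂[jf]? = some ff)
    (hlast : SameKind e fl x) (hlast' : ∀ k g, σ₁[k]? = some g → SameKind e g x → k ≤ il)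
    (hfirst : SameKind e' ff x) (hfirst' : ∀ k g, σ₂[k]? = some g → SameKind e' g x → jf ≤ k) :
    Conflict fl ff ∧ ¬ HB (σ₁ ++ σ₂) il (σ₁.length + jf) ∧
      ¬ HB (σ₁ ++ σ₂) (σ₁.length + jf) il := by
  have hi : i ≤ il := hlast' i e hie hlast.self
  have hj : jf ≤ j := hfirst' j e' hje hfirst.self
  have h₁ : HB σ₁ i il := .of_thread_eq_or_conflict hnr1 hie hil hlast.thread_eq_or_conflict hi
  have h₂ : HB σ₂ jf j := .of_thread_eq_or_conflict hnr2 hjf hje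
    (hfirst.thread_eq_or_conflict.imp Eq.symm Conflict.symm) hj
  have hforward : ¬ HB (σ₁ ++ σ₂) il (σ₁.length + jf) := fun h =>
    hincomp.1 ((h₁.append_right σ₂).trans (h.trans (h₂.append_left σ₁)))
  have hil_lt : il < σ₁.length := (List.getElem?_eq_some_iff.1 hil).1
  have hthread : fl.thread ≠ ff.thread := fun ht =>
    hforward (.of_thread_eq (List.getElem?_append_left_of_eq_some σ₂ hil)
      (by rwa [List.getElem?_append_length_add]) ht (by omega))
  exact ⟨hconf.of_sameKind hlast hfirst hthread, hforward, fun h => by have := h.le; omega⟩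

/-- if `σ₁` and `σ₂` are race-free but there is an HB-race in `σ₁·σ₂`
between `e ∈ σ₁` and `e' ∈ σ₂` (both accessing variable `x`), then there is an HB-race
between the last event of `σ₁` of the kind of `e` and the first event of `σ₂` of the
kind of `e'`. -/
theorem race_last_first (σ₁ σ₂ : Trace V L T) (x : V)
    (hnr1 : ¬ HBRace σ₁) (hnr2 : ¬ HBRace σ₂)
    (i j : ℕ) (e e' : Event V L T)
    (hie : σ₁[i]? = some e) (hje : σ₂[j]? = some e')
    (hex : e.op = Op.rd x ∨ e.op = Op.wt x)
    (he'x : e'.op = Op.rd x ∨ e'.op = Op.wt x)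
    (hconf : Conflict e e')
    (hincomp : ¬ HB (σ₁ ++ σ₂) i (σ₁.length + j) ∧ ¬ HB (σ₁ ++ σ₂) (σ₁.length + j) i)
    (il jf : ℕ) (fl ff : Event V L T)
    (hil : σ₁[il]? = some fl) (hjf : σ₂[jf]? = some ff)
    (hlast : SameKind e fl x) (hlast' : ∀ k g, σ₁[k]? = some g → SameKind e g x → k ≤ il)
    (hfirst : SameKind e' ff x) (hfirst' : ∀ k g, σ₂[k]? = some g → SameKind e' g x → jf ≤ k) :
    Conflict fl ff ∧ ¬ HB (σ₁ ++ σ₂) il (σ₁.length + jf) ∧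
      ¬ HB (σ₁ ++ σ₂) (σ₁.length + jf) il :=
  race_last_first_general σ₁ σ₂ x hnr1 hnr2 i j e e' hie hje hconf hincomp il jf fl ff hil hjf hlast
    hlast' hfirst hfirst'
end

section
/- If e₁ HB e₂ in a trace σ = σ₁·σ₂ with e₁ ∈ σ₁ and e₂ ∈ σ₂ (e₁ ≠ e₂), then there exist events f₁ ∈ σ₁ and f₂ ∈ σ₂ such that e₁ HB f₁ in σ₁, f₂ HB e₂ in σ₂, and at least one of the following holds: (a) f₁ and f₂ are performed by the same thread; (b) f₁ is a release and f₂ is an acquire of the same lock; (c) f₁ = ⟨t, fork(t')⟩ and f₂ is performed by t'; (d) f₁ is performed by t' and f₂ = ⟨t, join(t')⟩. -/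
variable {V L T : Type}

lemma crossing_aux (σ₁ σ₂ : Trace V L T) (i m : ℕ) (hi : i < σ₁.length)
    (h : HB (σ₁ ++ σ₂) i m) :
    (m < σ₁.length ∧ HB σ₁ i m) ∨
    (σ₁.length ≤ m ∧ ∃ k₁ k₂ f₁ f₂, σ₁[k₁]? = some f₁ ∧ σ₂[k₂]? = some f₂ ∧
      HB σ₁ i k₁ ∧ HB σ₂ k₂ (m - σ₁.length) ∧
      (f₁.thread = f₂.thread ∨
       (∃ l, f₁.op = Op.rel l ∧ f₂.op = Op.acq l) ∨
       f₁.op = Op.fork f₂.thread ∨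
       f₂.op = Op.join f₁.thread)) := by
  induction h with
  | refl => exact Or.inl ⟨hi, Relation.ReflTransGen.refl⟩
  | tail hab hbc ih =>
    rename_i b c
    obtain ⟨hbc1, e, e', he, he', hrel⟩ := hbc
    rcases ih with ⟨hbL, hib⟩ | ⟨hbL, k₁, k₂, f₁, f₂, hk₁, hk₂, h1, h2, hrel'⟩
    · rw [List.getElem?_append_left hbL] at he
      by_cases hcL : c < σ₁.length
      · rw [List.getElem?_append_left hcL] at he'
        exact Or.inl ⟨hcL, hib.tail ⟨hbc1, e, e', he, he', hrel⟩⟩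
      · push_neg at hcL
        rw [List.getElem?_append_right hcL] at he'
        exact Or.inr ⟨hcL, b, c - σ₁.length, e, e', he, he',
          hib, Relation.ReflTransGen.refl, hrel⟩
    · have hcL : σ₁.length ≤ c := hbL.trans hbc1.le
      rw [List.getElem?_append_right hbL] at he
      rw [List.getElem?_append_right hcL] at he'
      refine Or.inr ⟨hcL, k₁, k₂, f₁, f₂, hk₁, hk₂, h1,
        h2.tail ⟨?_, e, e', he, he', hrel⟩, hrel'⟩
      omega

/-- if `e₁ ∈ σ₁` happens-before `e₂ ∈ σ₂` in `σ₁·σ₂`, then there are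
events `f₁ ∈ σ₁` and `f₂ ∈ σ₂` with `e₁ HB f₁` in `σ₁`, `f₂ HB e₂` in `σ₂`, and
`f₁, f₂` are in the same thread, or form a rel/acq pair on the same lock, or a
fork-to-child pair, or a child-to-join pair. -/
theorem cross_hb_boundary (σ₁ σ₂ : Trace V L T) (i j : ℕ)
    (hi : i < σ₁.length) (hj : j < σ₂.length) (hne : i ≠ σ₁.length + j)
    (h : HB (σ₁ ++ σ₂) i (σ₁.length + j)) :
    ∃ k₁ k₂ f₁ f₂, σ₁[k₁]? = some f₁ ∧ σ₂[k₂]? = some f₂ ∧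
      HB σ₁ i k₁ ∧ HB σ₂ k₂ j ∧
      (f₁.thread = f₂.thread ∨
       (∃ l, f₁.op = Op.rel l ∧ f₂.op = Op.acq l) ∨
       f₁.op = Op.fork f₂.thread ∨
       f₂.op = Op.join f₁.thread) := by
  rcases crossing_aux σ₁ σ₂ i (σ₁.length + j) hi h with ⟨hlt, _⟩ | ⟨_, hres⟩
  · omega
  · simpa using hres
end

section
/- Let σ = σ₁·σ₂ be a trace with re-entrant locks, and let e' ∈ σ₂ be a read/write event performed by thread t'. Then LocksHeld_σ(e') = LocksHeld_{σ₂}(e') ∪ { ℓ : UnmatchedAcq_{σ₁}(t',ℓ) > UnmatchedRel_{σ₂}(t',ℓ) }. -/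
variable {V L T : Type}

variable [DecidableEq V] [DecidableEq L] [DecidableEq T]

/-- One step of the left-to-right matching of re-entrant acquires/releases of lock `l`
by thread `t`: the state `(a, r)` records the number of currently unmatched acquires
and the number of releases whose matching acquire lies outside the segment. -/
def lockStep (t : T) (l : L) (p : ℕ × ℕ) (e : Event V L T) : ℕ × ℕ :=
  if e.thread = t ∧ e.op = Op.acq l then (p.1 + 1, p.2)
  else if e.thread = t ∧ e.op = Op.rel l then
    (if p.1 = 0 then (p.1, p.2 + 1) else (p.1 - 1, p.2))
  else p

/-- Number of acquires of `l` by `t` in `σ` whose matching release does not occur in `σ`. -/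
def UnmatchedAcq (σ : Trace V L T) (t : T) (l : L) : ℕ :=
  (σ.foldl (lockStep t l) (0, 0)).1

/-- Number of releases of `l` by `t` in `σ` whose matching acquire does not occur in `σ`. -/
def UnmatchedRel (σ : Trace V L T) (t : T) (l : L) : ℕ :=
  (σ.foldl (lockStep t l) (0, 0)).2

/-- Well-nested: every release event has a matching acquire preceding it in the same thread. -/
def WellNested (σ : Trace V L T) : Prop :=
  ∀ t l, UnmatchedRel σ t l = 0

/-- The set of locks held by the thread of the event at position `i` of `σ`:
locks `l` with an acquire by the thread before `i` whose matching release is not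
before `i`, or a release by the thread after `i` whose matching acquire is before `i`
or outside `σ`. -/
def LocksHeld (σ : Trace V L T) (i : ℕ) : Set L :=
  {l | ∃ e, σ[i]? = some e ∧
    (0 < UnmatchedAcq (σ.take i) e.thread l ∨
     0 < UnmatchedRel (σ.drop (i + 1)) e.thread l)}


lemma foldl_lockStep (t : T) (l : L) (s : Trace V L T) (p : ℕ × ℕ) :
    List.foldl (lockStep t l) p s =
      ((List.foldl (lockStep t l) (0,0) s).1 + (p.1 - (List.foldl (lockStep t l) (0,0) s).2),
       p.2 + ((List.foldl (lockStep t l) (0,0) s).2 - p.1)) := by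
  induction s using List.reverseRecOn with
  | nil => simp
  | append_singleton s e ih =>
    simp only [List.foldl_append, List.foldl_cons, List.foldl_nil, ih]
    obtain ⟨a, r⟩ : ℕ × ℕ := List.foldl (lockStep t l) (0,0) s
    unfold lockStep
    dsimp only
    split
    · ext <;> dsimp <;> omega
    · split
      · rcases Nat.eq_zero_or_pos a with ha | ha
        · subst ha
          rw [if_pos rfl]
          rcases le_or_gt p.1 r with hr | hr
          · rw [if_pos (by omega)]
            ext <;> dsimp <;> omega
          · rw [if_neg (by omega)]
            ext <;> dsimp <;> omega
        · rw [if_neg (by omega), if_neg (by omega)]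
          ext <;> dsimp <;> omega
      · rfl

lemma UnmatchedAcq_append (t : T) (l : L) (s1 s2 : Trace V L T) :
    UnmatchedAcq (s1 ++ s2) t l =
      UnmatchedAcq s2 t l + (UnmatchedAcq s1 t l - UnmatchedRel s2 t l) := by
  unfold UnmatchedAcq UnmatchedRel
  rw [List.foldl_append, foldl_lockStep]

lemma UnmatchedRel_append (t : T) (l : L) (s1 s2 : Trace V L T) :
    UnmatchedRel (s1 ++ s2) t l =
      UnmatchedRel s1 t l + (UnmatchedRel s2 t l - UnmatchedAcq s1 t l) := by
  unfold UnmatchedAcq UnmatchedRel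
  rw [List.foldl_append, foldl_lockStep]

/-- for `σ = σ₁·σ₂` and a read/write event `e' ∈ σ₂` of thread `t'`
(at position `σ₁.length + j` of `σ`),
`LocksHeld σ e' = LocksHeld σ₂ e' ∪ {l | UnmatchedAcq σ₁ t' l > UnmatchedRel σ₂ t' l}`. -/
theorem locksHeld_concat_right (σ₁ σ₂ : Trace V L T) (j : ℕ) (e' : Event V L T) (t' : T) (x : V)
    (hje : σ₂[j]? = some e') (ht : e'.thread = t')
    (hrw : e'.op = Op.rd x ∨ e'.op = Op.wt x) :
    LocksHeld (σ₁ ++ σ₂) (σ₁.length + j) =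
      LocksHeld σ₂ j ∪ {l | UnmatchedRel σ₂ t' l < UnmatchedAcq σ₁ t' l} := by
  have hj : j < σ₂.length := (List.getElem?_eq_some_iff.mp hje).1
  have hidx : (σ₁ ++ σ₂)[σ₁.length + j]? = some e' := by
    rw [List.getElem?_append_right (by omega)]
    simpa using hje
  have htake : (σ₁ ++ σ₂).take (σ₁.length + j) = σ₁ ++ σ₂.take j := by
    rw [List.take_append, List.take_of_length_le (by omega),
      Nat.add_sub_cancel_left]
  have hdrop : (σ₁ ++ σ₂).drop (σ₁.length + j + 1) = σ₂.drop (j + 1) := by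
    rw [show σ₁.length + j + 1 = σ₁.length + (j + 1) by omega,
      List.drop_append, List.drop_eq_nil_of_le (by omega),
      List.nil_append, Nat.add_sub_cancel_left]
  have hstep : ∀ p : ℕ × ℕ, ∀ l : L, lockStep t' l p e' = p := by
    intro p l
    unfold lockStep
    rcases hrw with h | h <;> simp [h]
  have hdec : σ₂ = σ₂.take j ++ e' :: σ₂.drop (j + 1) := by
    conv_lhs => rw [← List.take_append_drop j σ₂]
    rw [List.drop_eq_getElem_cons hj]
    have : σ₂[j] = e' := by
      have := (List.getElem?_eq_some_iff.mp hje).2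
      simpa using this
    rw [this]
  ext l
  simp only [LocksHeld, Set.mem_union, Set.mem_setOf_eq, hidx, hje, htake, hdrop,
    Option.some.injEq, exists_eq_left', ht]
  have h2 : UnmatchedRel σ₂ t' l = UnmatchedRel (σ₂.take j) t' l +
      (UnmatchedRel (e' :: σ₂.drop (j+1)) t' l - UnmatchedAcq (σ₂.take j) t' l) := by
    conv_lhs => rw [hdec]
    exact UnmatchedRel_append t' l _ _
  have h3 : UnmatchedRel (e' :: σ₂.drop (j+1)) t' l = UnmatchedRel (σ₂.drop (j+1)) t' l := by
    unfold UnmatchedRel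
    rw [List.foldl_cons, hstep]
  have h4 := UnmatchedAcq_append t' l σ₁ (σ₂.take j)
  rw [h3] at h2
  constructor
  · rintro (h | h)
    · omega
    · exact Or.inl (Or.inr h)
  · rintro (h | h) <;> omega
end

section
/- Let σ = σ₁·σ₂ and define LockSet_τ(t,x) as the intersection over all access events e of variable x by thread t in τ of LocksHeld_τ(e) (equal to the universal set ⊤ when t does not access x in τ). Then LockSet_σ(t,x) = ( LockSet_{σ₁}(t,x) ∪ { ℓ : UnmatchedRel_{σ₂}(t,ℓ) > UnmatchedAcq_{σ₁}(t,ℓ) } ) ∩ ( LockSet_{σ₂}(t,x) ∪ { ℓ : UnmatchedAcq_{σ₁}(t,ℓ) > UnmatchedRel_{σ₂}(t,ℓ) } ). -/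
variable {V L T : Type}

variable [DecidableEq V] [DecidableEq L] [DecidableEq T]

/-- Positions of read/write events of variable `x` by thread `t` in `σ`. -/
def Accesses (σ : Trace V L T) (t : T) (x : V) : Set ℕ :=
  {i | ∃ e, σ[i]? = some e ∧ e.thread = t ∧ (e.op = Op.rd x ∨ e.op = Op.wt x)}

/-- The lockset of `(t, x)`: intersection of the locks held at each access of `x` by `t`
(the universal set when there is no such access). -/
def LockSet (σ : Trace V L T) (t : T) (x : V) : Set L :=
  ⋂ i ∈ Accesses σ t x, LocksHeld σ i

lemma foldl_lockStep_eq (t : T) (l : L) (σ : Trace V L T) (a r : ℕ) :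
    σ.foldl (lockStep t l) (a, r) =
      (UnmatchedAcq σ t l + (a - UnmatchedRel σ t l),
       r + (UnmatchedRel σ t l - a)) := by
  induction σ generalizing a r with
  | nil => simp [UnmatchedAcq, UnmatchedRel]
  | cons e σ' ih =>
    have step : ∀ (p : ℕ × ℕ), lockStep t l p e =
        if e.thread = t ∧ e.op = Op.acq l then (p.1 + 1, p.2)
        else if e.thread = t ∧ e.op = Op.rel l then
          (if p.1 = 0 then (p.1, p.2 + 1) else (p.1 - 1, p.2))
        else p := fun p => rfl
    simp only [UnmatchedAcq, UnmatchedRel, List.foldl_cons, step]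
    split_ifs <;> simp only [ih] <;>
      simp only [Prod.mk.injEq] <;> simp <;> constructor <;> omega

lemma unmatchedAcq_append (σ₁ σ₂ : Trace V L T) (t : T) (l : L) :
    UnmatchedAcq (σ₁ ++ σ₂) t l =
      UnmatchedAcq σ₂ t l + (UnmatchedAcq σ₁ t l - UnmatchedRel σ₂ t l) := by
  have h : σ₁.foldl (lockStep t l) (0, 0) = (UnmatchedAcq σ₁ t l, UnmatchedRel σ₁ t l) := rfl
  show ((σ₁ ++ σ₂).foldl (lockStep t l) (0, 0)).1 = _
  rw [List.foldl_append, h, foldl_lockStep_eq]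

lemma unmatchedRel_append (σ₁ σ₂ : Trace V L T) (t : T) (l : L) :
    UnmatchedRel (σ₁ ++ σ₂) t l =
      UnmatchedRel σ₁ t l + (UnmatchedRel σ₂ t l - UnmatchedAcq σ₁ t l) := by
  have h : σ₁.foldl (lockStep t l) (0, 0) = (UnmatchedAcq σ₁ t l, UnmatchedRel σ₁ t l) := rfl
  show ((σ₁ ++ σ₂).foldl (lockStep t l) (0, 0)).2 = _
  rw [List.foldl_append, h, foldl_lockStep_eq]

lemma access_take_succ {x : V} (σ : Trace V L T) (i : ℕ) (e : Event V L T)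
    (he : σ[i]? = some e) (hop : e.op = Op.rd x ∨ e.op = Op.wt x) (t : T) (l : L) :
    UnmatchedAcq (σ.take (i + 1)) t l = UnmatchedAcq (σ.take i) t l ∧
    UnmatchedRel (σ.take (i + 1)) t l = UnmatchedRel (σ.take i) t l := by
  have h1 : σ.take (i + 1) = σ.take i ++ [e] := by
    rw [List.take_succ, he]; rfl
  have h2 : lockStep t l (UnmatchedAcq (σ.take i) t l, UnmatchedRel (σ.take i) t l) e
      = (UnmatchedAcq (σ.take i) t l, UnmatchedRel (σ.take i) t l) := by
    rcases hop with h | h <;> simp [lockStep, h]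
  have h : (σ.take i).foldl (lockStep t l) (0, 0)
      = (UnmatchedAcq (σ.take i) t l, UnmatchedRel (σ.take i) t l) := rfl
  constructor
  · show ((σ.take (i+1)).foldl (lockStep t l) (0, 0)).1 = _
    rw [h1, List.foldl_append, h, List.foldl_cons, h2, List.foldl_nil]
  · show ((σ.take (i+1)).foldl (lockStep t l) (0, 0)).2 = _
    rw [h1, List.foldl_append, h, List.foldl_cons, h2, List.foldl_nil]

lemma locksHeld_append_left {x : V} (σ₁ σ₂ : Trace V L T) (t : T) (i : ℕ)
    (hi : i ∈ Accesses σ₁ t x) :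
    LocksHeld (σ₁ ++ σ₂) i =
      LocksHeld σ₁ i ∪ {l | UnmatchedAcq σ₁ t l < UnmatchedRel σ₂ t l} := by
  obtain ⟨e, he, hth, hop⟩ := hi
  have hlen : i < σ₁.length := (List.getElem?_eq_some_iff.mp he).1
  have he' : (σ₁ ++ σ₂)[i]? = some e := by
    rw [List.getElem?_append, if_pos hlen]; exact he
  have htake : (σ₁ ++ σ₂).take i = σ₁.take i := by
    rw [List.take_append, Nat.sub_eq_zero_of_le (le_of_lt hlen),
      List.take_zero, List.append_nil]
  have hdrop : (σ₁ ++ σ₂).drop (i + 1) = σ₁.drop (i + 1) ++ σ₂ := by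
    rw [List.drop_append, Nat.sub_eq_zero_of_le hlen, List.drop_zero]
  ext l
  have hA := unmatchedAcq_append (σ₁.take (i + 1)) (σ₁.drop (i + 1)) t l
  rw [List.take_append_drop] at hA
  have hAcc := (access_take_succ σ₁ i e he hop t l).1
  have hRapp := unmatchedRel_append (σ₁.drop (i + 1)) σ₂ t l
  simp only [LocksHeld, Set.mem_setOf_eq, Set.mem_union, he, he', hth,
    Option.some.injEq, exists_eq_left', htake, hdrop, hRapp]
  omega

lemma locksHeld_append_right {x : V} (σ₁ σ₂ : Trace V L T) (t : T) (j : ℕ)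
    (hj : j ∈ Accesses σ₂ t x) :
    LocksHeld (σ₁ ++ σ₂) (σ₁.length + j) =
      LocksHeld σ₂ j ∪ {l | UnmatchedRel σ₂ t l < UnmatchedAcq σ₁ t l} := by
  obtain ⟨e, he, hth, hop⟩ := hj
  have hlen : j < σ₂.length := (List.getElem?_eq_some_iff.mp he).1
  have he' : (σ₁ ++ σ₂)[σ₁.length + j]? = some e := by
    rw [List.getElem?_append_right (Nat.le_add_right _ _), Nat.add_sub_cancel_left]; exact he
  have htake : (σ₁ ++ σ₂).take (σ₁.length + j) = σ₁ ++ σ₂.take j := by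
    rw [List.take_append, Nat.add_sub_cancel_left,
      List.take_of_length_le (Nat.le_add_right _ _)]
  have hdrop : (σ₁ ++ σ₂).drop (σ₁.length + j + 1) = σ₂.drop (j + 1) := by
    rw [List.drop_append,
      List.drop_eq_nil_of_le (by omega), Nat.add_assoc, Nat.add_sub_cancel_left,
      List.nil_append]
  ext l
  have hR := unmatchedRel_append (σ₂.take (j + 1)) (σ₂.drop (j + 1)) t l
  rw [List.take_append_drop] at hR
  have hAcc := (access_take_succ σ₂ j e he hop t l).1
  have hRcc := (access_take_succ σ₂ j e he hop t l).2
  have hAapp := unmatchedAcq_append σ₁ (σ₂.take j) t l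
  simp only [LocksHeld, Set.mem_setOf_eq, Set.mem_union, he, he', hth,
    Option.some.injEq, exists_eq_left', htake, hdrop, hAapp]
  omega


/-- for `σ = σ₁·σ₂`, thread `t` and variable `x`,
`LockSet σ t x = (LockSet σ₁ t x ∪ {l | UnmatchedRel σ₂ t l > UnmatchedAcq σ₁ t l})
              ∩ (LockSet σ₂ t x ∪ {l | UnmatchedAcq σ₁ t l > UnmatchedRel σ₂ t l})`. -/
theorem lockSet_concat (σ₁ σ₂ : Trace V L T) (t : T) (x : V) :
    LockSet (σ₁ ++ σ₂) t x =
      (LockSet σ₁ t x ∪ {l | UnmatchedAcq σ₁ t l < UnmatchedRel σ₂ t l}) ∩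
      (LockSet σ₂ t x ∪ {l | UnmatchedRel σ₂ t l < UnmatchedAcq σ₁ t l}) := by
  ext l
  have hmem : ∀ (σ : Trace V L T),
      l ∈ LockSet σ t x ↔ ∀ i ∈ Accesses σ t x, l ∈ LocksHeld σ i :=
    fun σ => Set.mem_iInter₂
  have acc1 : ∀ i ∈ Accesses σ₁ t x, i ∈ Accesses (σ₁ ++ σ₂) t x := by
    rintro i ⟨e, he, hth, hop⟩
    exact ⟨e, by rw [List.getElem?_append, if_pos (List.getElem?_eq_some_iff.mp he).1]; exact he,
      hth, hop⟩
  have acc2 : ∀ j ∈ Accesses σ₂ t x, σ₁.length + j ∈ Accesses (σ₁ ++ σ₂) t x := by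
    rintro j ⟨e, he, hth, hop⟩
    exact ⟨e, by rw [List.getElem?_append_right (Nat.le_add_right _ _),
      Nat.add_sub_cancel_left]; exact he, hth, hop⟩
  simp only [Set.mem_inter_iff, Set.mem_union, hmem, Set.mem_setOf_eq]
  constructor
  · intro h
    constructor
    · by_cases hS : UnmatchedAcq σ₁ t l < UnmatchedRel σ₂ t l
      · exact Or.inr hS
      · refine Or.inl fun i hi => ?_
        have hthis := h i (acc1 i hi)
        rw [locksHeld_append_left σ₁ σ₂ t i hi] at hthis
        rcases hthis with hthis | hthis
        · exact hthis
        · exact absurd hthis hS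
    · by_cases hS : UnmatchedRel σ₂ t l < UnmatchedAcq σ₁ t l
      · exact Or.inr hS
      · refine Or.inl fun j hj => ?_
        have hthis := h _ (acc2 j hj)
        rw [locksHeld_append_right σ₁ σ₂ t j hj] at hthis
        rcases hthis with hthis | hthis
        · exact hthis
        · exact absurd hthis hS
  · rintro ⟨h1, h2⟩ i hi
    obtain ⟨e, he, hth, hop⟩ := hi
    by_cases hlt : i < σ₁.length
    · have he1 : σ₁[i]? = some e := by
        rw [List.getElem?_append, if_pos hlt] at he; exact he
      have hi1 : i ∈ Accesses σ₁ t x := ⟨e, he1, hth, hop⟩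
      rw [locksHeld_append_left σ₁ σ₂ t i hi1]
      rcases h1 with h1 | h1
      · exact Set.mem_union_left _ (h1 i hi1)
      · exact Set.mem_union_right _ h1
    · have hle : σ₁.length ≤ i := le_of_not_gt hlt
      have he2 : σ₂[i - σ₁.length]? = some e := by
        rw [List.getElem?_append_right hle] at he; exact he
      have hi2 : (i - σ₁.length) ∈ Accesses σ₂ t x := ⟨e, he2, hth, hop⟩
      have heq : i = σ₁.length + (i - σ₁.length) := by omega
      rw [heq, locksHeld_append_right σ₁ σ₂ t _ hi2]
      rcases h2 with h2 | h2
      · exact Set.mem_union_left _ (h2 _ hi2)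
      · exact Set.mem_union_right _ h2
end
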